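/- arXiv:1307.1941 — 3 statements merged into one kernel-verified Lean document; each statement's English description precedes it below -/
import Mathlib

section
/- Let P be a monic polynomial of degree q ≥ 1 and r > 0. Let μ be area (planar Lebesgue) measure restricted to the lemniscate region {z : |P(z)| ≤ r}. Then the Christoffel function of the measure |P(z)|² dμ(z) is bounded below away from zero uniformly on compact subsets of {z : |P(z)| < r}: for each compact K ⊂ {z : |P(z)| < r} there is c_K > 0 such that λ(u; |P|²dA) ≥ c_K for all u ∈ K. Equivalently, Σ_{n=0}^∞ |φ_n(u; |P|²dA)|² ≤ c_K^{-1} on K. -/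
/-!
Choose `δ > 0` with `closedBall u δ ⊆ {|P| < r}` for all `u ∈ K`. For a monic `P` of degree `q`,
`|P z| = ∏ |z - a|` over the roots, so on every circle `|z - u| = ρ` whose radius stays `ε`-away
from all the distances `|a - u|` we have `|P| ≥ ε ^ q`; with `ε = δ / (8q)` such radii fill at
least half of `[δ/2, δ]`. On each of these circles the mean value property for `Q²` gives
`1 = |Q(u)|² ≤ ⨍ |Q|²`, hence `⨍ |QP|² ≥ ε ^ (2q)`, and integrating in polar coordinates bounds
`∫ |Q|² |P|² dA` over the disc, hence over the (compact) lemniscate, below by a constant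
depending only on `δ` and `q`.
-/

open MeasureTheory Polynomial
open scoped ENNReal NNReal

open Set Metric Real

theorem Polynomial.pow_natDegree_le_norm_eval {K : Type*} [NormedField K] {P : K[X]}
    (hsplit : P.Splits) (hP : P.Monic) {ε : ℝ} (hε : 0 ≤ ε) {z : K}
    (h : ∀ a ∈ P.roots, ε ≤ ‖z - a‖) : ε ^ P.natDegree ≤ ‖P.eval z‖ := by
  rw [hsplit.eval_eq_prod_roots_of_monic hP, hsplit.natDegree_eq_card_roots]
  refine le_of_le_of_eq ?_ (map_multiset_prod (normHom : K →*₀ ℝ) _).symm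
  rw [Multiset.map_map, ← Multiset.prod_replicate, ← Multiset.map_const']
  exact Multiset.prod_map_le_prod_map₀ _ _ (fun _ _ => hε) h

theorem le_dist_of_mem_sphere_of_notMem_Ioo {X : Type*} [PseudoMetricSpace X] {z u a : X}
    {ρ ε : ℝ} (hz : z ∈ sphere u ρ) (hρ : ρ ∉ Ioo (dist a u - ε) (dist a u + ε)) :
    ε ≤ dist z a := by
  rw [mem_sphere] at hz
  have hdist := abs_dist_sub_le z a u
  rw [hz] at hdist
  simp only [mem_Ioo, not_and_or, not_lt] at hρ
  rcases hρ with h | h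
  · linarith [neg_abs_le (ρ - dist a u)]
  · linarith [le_abs_self (ρ - dist a u)]

theorem ofReal_le_volume_Icc_diff_biUnion_Ioo {ι : Type*} (s : Finset ι) (x : ι → ℝ)
    {a b ε : ℝ} (hab : a ≤ b) (h : s.card * (2 * ε) ≤ (b - a) / 2) :
    ENNReal.ofReal ((b - a) / 2) ≤ volume (Icc a b \ ⋃ i ∈ s, Ioo (x i - ε) (x i + ε)) := by
  have hbad : volume (⋃ i ∈ s, Ioo (x i - ε) (x i + ε)) ≤ ENNReal.ofReal ((b - a) / 2) :=
    calc volume (⋃ i ∈ s, Ioo (x i - ε) (x i + ε))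
        ≤ ∑ i ∈ s, volume (Ioo (x i - ε) (x i + ε)) := measure_biUnion_finset_le s _
      _ = ENNReal.ofReal (s.card * (2 * ε)) := by
        simp only [Real.volume_Ioo, add_sub_sub_cancel, ← two_mul]
        rw [Finset.sum_const, nsmul_eq_mul, ENNReal.ofReal_mul (Nat.cast_nonneg _),
          ENNReal.ofReal_natCast]
      _ ≤ ENNReal.ofReal ((b - a) / 2) := ENNReal.ofReal_le_ofReal h
  calc ENNReal.ofReal ((b - a) / 2)
      = ENNReal.ofReal (b - a) - ENNReal.ofReal ((b - a) / 2) := by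
        rw [← ENNReal.ofReal_sub _ (by linarith)]; ring_nf
    _ ≤ volume (Icc a b) - volume (⋃ i ∈ s, Ioo (x i - ε) (x i + ε)) := by
        rw [Real.volume_Icc]; gcongr
    _ ≤ _ := le_measure_sdiff

theorem lintegral_eq_lintegral_Ioi_mul_lintegral_circleMap {g : ℂ → ℝ≥0∞} (hg : Measurable g)
    (c : ℂ) :
    ∫⁻ z, g z = ∫⁻ ρ in Ioi 0, ENNReal.ofReal ρ * ∫⁻ θ in Ioo (-π) π, g (circleMap c ρ θ) := by
  have hpolar (p : ℝ × ℝ) : c + Complex.polarCoord.symm p = circleMap c p.1 p.2 := by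
    simp only [Complex.polarCoord_symm_apply, circleMap, Complex.exp_mul_I]
    push_cast
    ring
  rw [← lintegral_add_left_eq_self g c, ← Complex.lintegral_comp_polarCoord_symm,
    polarCoord_target, Measure.volume_eq_prod, setLIntegral_prod]
  · simp only [hpolar, smul_eq_mul]
    refine setLIntegral_congr_fun measurableSet_Ioi fun ρ _ => ?_
    exact lintegral_const_mul _ (hg.comp (by fun_prop))
  · simp only [hpolar]
    exact (ENNReal.measurable_ofReal.comp measurable_fst).smul
      (hg.comp (by fun_prop)) |>.aemeasurable

theorem lintegral_Ioo_circleMap_eq_ofReal_circleAverage {g : ℂ → ℝ} (hg : Continuous g)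
    (hg0 : 0 ≤ g) (c : ℂ) (R : ℝ) :
    ∫⁻ θ in Ioo (-π) π, ENNReal.ofReal (g (circleMap c R θ)) =
      ENNReal.ofReal (2 * π * circleAverage g c R) := by
  have hcont : Continuous fun θ => g (circleMap c R θ) := hg.comp (continuous_circleMap c R)
  rw [← ofReal_integral_eq_lintegral_ofReal
    (hcont.integrableOn_Icc.mono_set Ioo_subset_Icc_self) (.of_forall fun θ => hg0 _),
    circleAverage_def, smul_eq_mul, mul_inv_cancel_left₀ two_pi_pos.ne',
    ← integral_Ioc_eq_integral_Ioo, ← intervalIntegral.integral_of_le (by linarith [pi_pos])]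
  have := ((periodic_circleMap c R).comp g).intervalIntegral_add_eq (-π) 0
  rw [show -π + 2 * π = π by ring, zero_add] at this
  exact congrArg _ this

theorem norm_circleAverage_le {E : Type*} [NormedAddCommGroup E] [NormedSpace ℝ E]
    (f : ℂ → E) (c : ℂ) (R : ℝ) :
    ‖circleAverage f c R‖ ≤ circleAverage (fun z => ‖f z‖) c R := by
  rw [circleAverage_def, circleAverage_def, norm_smul, smul_eq_mul, Real.norm_of_nonneg
    (inv_pos.2 two_pi_pos).le]
  gcongr
  exact intervalIntegral.norm_integral_le_integral_norm two_pi_pos.le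

theorem DiffContOnCl.norm_sq_le_circleAverage {f : ℂ → ℂ} {c : ℂ} {R : ℝ}
    (hf : DiffContOnCl ℂ f (ball c |R|)) :
    ‖f c‖ ^ 2 ≤ Real.circleAverage (fun z => ‖f z‖ ^ 2) c R := by
  calc ‖f c‖ ^ 2 = ‖Real.circleAverage (fun z => f z • f z) c R‖ := by
        rw [(hf.smul hf).circleAverage, smul_eq_mul, norm_mul, sq]
    _ ≤ Real.circleAverage (fun z => ‖f z‖ ^ 2) c R := by
        simpa only [smul_eq_mul, ← sq, norm_pow] using
          norm_circleAverage_le (fun z => f z • f z) c R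

theorem sq_mul_norm_sq_le_circleAverage_norm_mul_sq {f w : ℂ → ℂ} {c : ℂ} {R m : ℝ}
    (hf : Differentiable ℂ f) (hw : Continuous w) (hm : 0 ≤ m)
    (hwm : ∀ z ∈ sphere c |R|, m ≤ ‖w z‖) :
    m ^ 2 * ‖f c‖ ^ 2 ≤ circleAverage (fun z => ‖f z * w z‖ ^ 2) c R := by
  have hfc := hf.continuous
  calc m ^ 2 * ‖f c‖ ^ 2 ≤ m ^ 2 * circleAverage (fun z => ‖f z‖ ^ 2) c R := by
        gcongr; exact hf.diffContOnCl.norm_sq_le_circleAverage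
    _ = circleAverage (fun z => m ^ 2 * ‖f z‖ ^ 2) c R :=
        (circleAverage_fun_smul (a := m ^ 2) (f := fun z => ‖f z‖ ^ 2)).symm
    _ ≤ circleAverage (fun z => ‖f z * w z‖ ^ 2) c R := by
        refine circleAverage_mono (by fun_prop : Continuous _).continuousOn.circleIntegrable'
          (by fun_prop : Continuous _).continuousOn.circleIntegrable' fun z hz => ?_
        rw [norm_mul, mul_pow, mul_comm]
        gcongr
        exact hwm z hz

theorem Polynomial.isCompact_setOf_norm_eval_le {R : Type*} [NormedRing R]
    [IsAbsoluteValue (norm : R → ℝ)] [ProperSpace R]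
    {P : R[X]} (hP : 0 < P.degree) (r : ℝ) : IsCompact {z | ‖P.eval z‖ ≤ r} := by
  simpa [Set.preimage] using
    (P.isProperMap_eval hP).isCompact_preimage (isCompact_closedBall 0 r)

theorem integral_norm_sq_withDensity_nnnorm_sq {α 𝕜 : Type*} [MeasurableSpace α]
    [NormedDivisionRing 𝕜] [MeasurableSpace 𝕜] [OpensMeasurableSpace 𝕜] {μ : Measure α} {w : α → 𝕜}
    (hw : Measurable w) (f : α → 𝕜) :
    ∫ z, ‖f z‖ ^ 2 ∂μ.withDensity (fun z => (‖w z‖₊ : ℝ≥0∞) ^ 2) =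
      ∫ z, ‖f z * w z‖ ^ 2 ∂μ := by
  have hcast : (fun z => (‖w z‖₊ : ℝ≥0∞) ^ 2) = fun z => ((‖w z‖₊ ^ 2 : ℝ≥0) : ℝ≥0∞) := by
    simp
  rw [hcast, integral_withDensity_eq_integral_smul (hw.nnnorm.pow_const 2)]
  refine integral_congr_ae (.of_forall fun z => ?_)
  simp [NNReal.smul_def, norm_mul, mul_pow, mul_comm]

namespace Polynomial

def rootAvoidingRadii (P : ℂ[X]) (u : ℂ) (δ ε : ℝ) : Set ℝ :=
  Icc (δ / 2) δ \ ⋃ a ∈ P.roots.toFinset, Ioo (dist a u - ε) (dist a u + ε)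

variable {P : ℂ[X]} {u : ℂ} {δ ε ρ : ℝ}

theorem measurableSet_rootAvoidingRadii : MeasurableSet (P.rootAvoidingRadii u δ ε) :=
  measurableSet_Icc.diff (Finset.measurableSet_biUnion _ fun _ _ => measurableSet_Ioo)

theorem rootAvoidingRadii_subset_Icc : P.rootAvoidingRadii u δ ε ⊆ Icc (δ / 2) δ :=
  sdiff_subset

theorem ofReal_le_volume_rootAvoidingRadii (hδ : 0 ≤ δ) (hεδ : P.natDegree * ε ≤ δ / 8) :
    ENNReal.ofReal (δ / 4) ≤ volume (P.rootAvoidingRadii u δ ε) := by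
  have hcard : (P.roots.toFinset.card : ℝ) ≤ P.natDegree := by
    exact_mod_cast (Multiset.toFinset_card_le _).trans (card_roots' P)
  calc ENNReal.ofReal (δ / 4) = ENNReal.ofReal ((δ - δ / 2) / 2) := by ring_nf
    _ ≤ _ := ofReal_le_volume_Icc_diff_biUnion_Ioo _ (dist · u) (half_le_self hδ) ?_
  rcases le_or_gt ε 0 with hε | hε
  · linarith [mul_nonpos_of_nonneg_of_nonpos (Nat.cast_nonneg P.roots.toFinset.card) hε]
  · linarith [mul_le_mul_of_nonneg_right hcard hε.le]

theorem pow_natDegree_le_norm_eval_of_mem_sphere (hP : P.Monic) (hε : 0 ≤ ε)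
    (hρ : ρ ∈ P.rootAvoidingRadii u δ ε) {z : ℂ} (hz : z ∈ sphere u ρ) :
    ε ^ P.natDegree ≤ ‖P.eval z‖ :=
  P.pow_natDegree_le_norm_eval (IsAlgClosed.splits P) hP hε fun a ha =>
    dist_eq_norm z a ▸ le_dist_of_mem_sphere_of_notMem_Ioo hz
      fun h => hρ.2 (mem_biUnion (Multiset.mem_toFinset.2 ha) h)

end Polynomial

theorem ofReal_le_setLIntegral_closedBall_norm_mul_eval_sq {P Q : ℂ[X]} (hP : P.Monic) {u : ℂ}
    (hQ : Q.eval u = 1) {δ ε : ℝ} (hδ : 0 < δ) (hε : 0 ≤ ε) (hεδ : P.natDegree * ε ≤ δ / 8) :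
    ENNReal.ofReal (π / 4 * δ ^ 2 * ε ^ (2 * P.natDegree)) ≤
      ∫⁻ z in closedBall u δ, ENNReal.ofReal (‖Q.eval z * P.eval z‖ ^ 2) := by
  set good := P.rootAvoidingRadii u δ ε
  have hgood_pos : good ⊆ Ioi 0 := fun ρ hρ =>
    (half_pos hδ).trans_le (rootAvoidingRadii_subset_Icc hρ).1
  set g : ℂ → ℝ≥0∞ := fun z => ENNReal.ofReal (‖Q.eval z * P.eval z‖ ^ 2)
  have hg : Measurable g := by fun_prop
  have hcircle (ρ) (hρ : ρ ∈ good) :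
      ENNReal.ofReal (2 * π * (ε ^ P.natDegree) ^ 2) ≤
        ∫⁻ θ in Ioo (-π) π, g (circleMap u ρ θ) := by
    rw [lintegral_Ioo_circleMap_eq_ofReal_circleAverage (g := fun z => ‖Q.eval z * P.eval z‖ ^ 2)
      (by fun_prop) (fun _ => by positivity)]
    gcongr
    have hρ0 : 0 < ρ := hgood_pos hρ
    simpa [hQ] using sq_mul_norm_sq_le_circleAverage_norm_mul_sq (c := u) (R := ρ)
      Q.differentiable P.continuous (by positivity) fun z hz =>
        pow_natDegree_le_norm_eval_of_mem_sphere hP hε hρ (abs_of_pos hρ0 ▸ hz)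
  calc ENNReal.ofReal (π / 4 * δ ^ 2 * ε ^ (2 * P.natDegree))
      = ENNReal.ofReal (δ / 2) * ENNReal.ofReal (2 * π * (ε ^ P.natDegree) ^ 2) *
          ENNReal.ofReal (δ / 4) := by
        rw [← ENNReal.ofReal_mul (by positivity), ← ENNReal.ofReal_mul (by positivity)]
        ring_nf
    _ ≤ ∫⁻ _ in good, ENNReal.ofReal (δ / 2) * ENNReal.ofReal (2 * π * (ε ^ P.natDegree) ^ 2) := by
        rw [setLIntegral_const]
        gcongr
        exact ofReal_le_volume_rootAvoidingRadii hδ.le hεδ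
    _ ≤ ∫⁻ ρ in good, ENNReal.ofReal ρ *
          ∫⁻ θ in Ioo (-π) π, (closedBall u δ).indicator g (circleMap u ρ θ) := by
        refine setLIntegral_mono' measurableSet_rootAvoidingRadii fun ρ hρ => ?_
        have hρδ := rootAvoidingRadii_subset_Icc hρ
        gcongr
        · exact hρδ.1
        · refine (hcircle ρ hρ).trans_eq (lintegral_congr fun θ => (indicator_of_mem ?_ g).symm)
          exact closedBall_subset_closedBall hρδ.2
            (circleMap_mem_closedBall u (hgood_pos hρ).le θ)
    _ ≤ ∫⁻ ρ in Ioi 0, ENNReal.ofReal ρ *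
          ∫⁻ θ in Ioo (-π) π, (closedBall u δ).indicator g (circleMap u ρ θ) :=
        lintegral_mono_set hgood_pos
    _ = ∫⁻ z in closedBall u δ, g z := by
        rw [← lintegral_indicator measurableSet_closedBall,
          lintegral_eq_lintegral_Ioi_mul_lintegral_circleMap
            (hg.indicator measurableSet_closedBall)]

theorem stmt8_general (P : Polynomial ℂ) (hP : P.Monic) (hq : 1 ≤ P.natDegree) (r : ℝ)
    (K : Set ℂ) (hK : IsCompact K) (hKsub : K ⊆ {z : ℂ | ‖P.eval z‖ < r}) :
    ∃ c > 0, ∀ u ∈ K,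
      c ≤ sInf {t : ℝ | ∃ Q : Polynomial ℂ, Q.eval u = 1 ∧
        t = ∫ z, ‖Q.eval z‖ ^ 2
          ∂((volume.restrict {z : ℂ | ‖P.eval z‖ ≤ r}).withDensity
              (fun z => (‖P.eval z‖₊ : ℝ≥0∞) ^ 2))} := by
  set S := {z : ℂ | ‖P.eval z‖ ≤ r}
  have hS : IsCompact S := P.isCompact_setOf_norm_eval_le (natDegree_pos_iff_degree_pos.mp hq) r
  obtain ⟨δ, hδ, hKδ⟩ :=
    hK.exists_cthickening_subset_open (isOpen_lt (by fun_prop) continuous_const) hKsub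
  set ε := δ / (8 * P.natDegree)
  have hεδ : P.natDegree * ε = δ / 8 := by
    simp only [ε]
    field_simp
  refine ⟨π / 4 * δ ^ 2 * ε ^ (2 * P.natDegree), by positivity,
    fun u hu => le_csInf ⟨_, 1, eval_one, rfl⟩ ?_⟩
  rintro _ ⟨Q, hQ, rfl⟩
  have hball : closedBall u δ ⊆ S :=
    (closedBall_subset_cthickening hu δ).trans
      (hKδ.trans (ofPred_subset_ofPred.2 fun _ => le_of_lt))
  have hint : IntegrableOn (fun z => ‖Q.eval z * P.eval z‖ ^ 2) S :=
    (by fun_prop : Continuous _).continuousOn.integrableOn_compact hS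
  rw [integral_norm_sq_withDensity_nnnorm_sq P.continuous.measurable,
    ← ENNReal.ofReal_le_ofReal_iff (integral_nonneg fun _ => by positivity),
    ofReal_integral_eq_lintegral_ofReal hint (.of_forall fun _ => by positivity)]
  exact (ofReal_le_setLIntegral_closedBall_norm_mul_eval_sq hP hQ hδ (by positivity)
    hεδ.le).trans (lintegral_mono_set hball)

/-- For area measure on the lemniscate `{|P| ≤ r}`, the Christoffel function of the
measure `|P|² dA` is bounded below away from zero uniformly on compact subsets of
`{|P| < r}`. -/
theorem stmt8 (P : Polynomial ℂ) (hP : P.Monic) (hq : 1 ≤ P.natDegree) (r : ℝ) (hr : 0 < r)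
    (K : Set ℂ) (hK : IsCompact K) (hKsub : K ⊆ {z : ℂ | ‖P.eval z‖ < r}) :
    ∃ c > 0, ∀ u ∈ K,
      c ≤ sInf {t : ℝ | ∃ Q : Polynomial ℂ, Q.eval u = 1 ∧
        t = ∫ z, ‖Q.eval z‖ ^ 2
          ∂((volume.restrict {z : ℂ | ‖P.eval z‖ ≤ r}).withDensity
              (fun z => (‖P.eval z‖₊ : ℝ≥0∞) ^ 2))} :=
  stmt8_general P hP hq r K hK hKsub
end

section
/- Let μ be a finite Borel measure with compact infinite support in ℂ and let M be the Hessenberg matrix of multiplication by z in the orthonormal polynomial basis of the closure of polynomials in L²(μ). Let P be a monic polynomial of degree q ≥ 1 and r > 0. If lim_{n→∞} κ_n/κ_{n+q} = r and lim_{n→∞} ∫ |P(z)|² |φ_n(z;μ)|² dμ(z) = r², then lim_{n→∞} ‖(P(M) − rR^q) R^n e_j‖ = 0 for every basis vector e_j, i.e., (P(M) − rR^q)R^n → 0 strongly. -/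
/-!
In the orthonormal basis `φ` of the closure of the polynomials, `Rⁿ eⱼ = eₘ` with `m = n + j`
corresponds to `φₘ`, and `(P(M) - r Rᵠ) eₘ` to `P φₘ - r φₘ₊_q`. Hence its squared norm is
`∫ |P|² |φₘ|² dμ + r² - 2 r ⟨P φₘ, φₘ₊_q⟩`, and the cross term equals `κₘ / κₘ₊_q` because
`P φₘ` has leading term `κₘ z^(m+q)`, so `P φₘ - (κₘ / κₘ₊_q) φₘ₊_q` has degree `< m + q`.
Both hypotheses then make the squared norm tend to `r² + r² - 2 r · r = 0`.
-/

open MeasureTheory Polynomial Filter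

noncomputable section

/-- The support of a measure: points all of whose neighborhoods have positive measure. -/
def msupport (mu : Measure ℂ) : Set ℂ := {x | ∀ U ∈ nhds x, mu U ≠ 0}

/-- `φ` is the sequence of orthonormal polynomials for `μ`, with positive leading
coefficients `κ`. -/
def IsOrthonormalPolys (mu : Measure ℂ) (φ : ℕ → Polynomial ℂ) (κ : ℕ → ℝ) : Prop :=
  (∀ n, (φ n).degree = n) ∧ (∀ n, 0 < κ n) ∧ (∀ n, (φ n).leadingCoeff = (κ n : ℂ)) ∧
  ∀ m n, (∫ z, (φ m).eval z * (starRingEnd ℂ) ((φ n).eval z) ∂mu) = if m = n then 1 else 0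

open scoped InnerProductSpace ComplexConjugate

local notation "ℓ²" => lp (fun _ : ℕ => ℂ) 2

lemma measure_compl_msupport (mu : Measure ℂ) : mu (msupport mu)ᶜ = 0 := by
  refine measure_null_of_locally_null _ fun x hx => ?_
  simp only [msupport, Set.mem_compl_iff, Set.mem_ofPred_eq, not_forall, not_not] at hx
  obtain ⟨U, hU, hU0⟩ := hx
  exact ⟨U, mem_nhdsWithin_of_mem_nhds hU, hU0⟩

lemma Continuous.integrable_of_isCompact_msupport {mu : Measure ℂ} [IsFiniteMeasure mu]
    (hcs : IsCompact (msupport mu)) {E : Type*} [NormedAddCommGroup E] {f : ℂ → E}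
    (hf : Continuous f) : Integrable f mu := by
  have hrestrict : mu.restrict (msupport mu) = mu :=
    Measure.restrict_eq_self_of_ae_mem (measure_compl_msupport mu)
  simpa only [IntegrableOn, hrestrict] using hf.continuousOn.integrableOn_compact (μ := mu) hcs

def polyInner (mu : Measure ℂ) (p s : ℂ[X]) : ℂ :=
  ∫ z, p.eval z * conj (s.eval z) ∂mu

section polyInner

variable {mu : Measure ℂ}

lemma polyInner_add [IsFiniteMeasure mu] (hcs : IsCompact (msupport mu)) (p₁ p₂ s : ℂ[X]) :
    polyInner mu (p₁ + p₂) s = polyInner mu p₁ s + polyInner mu p₂ s := by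
  have hint : ∀ p : ℂ[X], Integrable (fun z => p.eval z * conj (s.eval z)) mu := fun p =>
    (p.continuous.mul (Complex.continuous_conj.comp s.continuous)).integrable_of_isCompact_msupport
      hcs
  simp only [polyInner, eval_add, add_mul]
  exact integral_add (hint p₁) (hint p₂)

lemma polyInner_smul (a : ℂ) (p s : ℂ[X]) :
    polyInner mu (a • p) s = a * polyInner mu p s := by
  simp only [polyInner, eval_smul, smul_eq_mul, mul_assoc, integral_const_mul]

lemma conj_polyInner (p s : ℂ[X]) : conj (polyInner mu s p) = polyInner mu p s := by
  simp only [polyInner, ← integral_conj, map_mul, Complex.conj_conj, mul_comm]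

lemma polyInner_self (p : ℂ[X]) :
    polyInner mu p p = ((∫ z, ‖p.eval z‖ ^ 2 ∂mu : ℝ) : ℂ) := by
  simp only [polyInner, Complex.mul_conj, Complex.normSq_eq_norm_sq]
  exact integral_complex_ofReal

end polyInner

namespace IsOrthonormalPolys

variable {mu : Measure ℂ} {φ : ℕ → ℂ[X]} {κ : ℕ → ℝ}

def toSequence (hON : IsOrthonormalPolys mu φ κ) : Polynomial.Sequence ℂ := ⟨φ, hON.1⟩

lemma natDegree_eq (hON : IsOrthonormalPolys mu φ κ) (n : ℕ) : (φ n).natDegree = n :=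
  hON.toSequence.natDegree_eq n

lemma coeff_self (hON : IsOrthonormalPolys mu φ κ) (n : ℕ) : (φ n).coeff n = κ n := by
  rw [← hON.2.2.1 n, leadingCoeff, hON.natDegree_eq]

lemma isUnit_leadingCoeff (hON : IsOrthonormalPolys mu φ κ) (n : ℕ) :
    IsUnit (hON.toSequence n).leadingCoeff :=
  (hON.2.2.1 n).symm ▸ Ne.isUnit (Complex.ofReal_ne_zero.2 (hON.2.1 n).ne')

lemma polyInner_eq (hON : IsOrthonormalPolys mu φ κ) (m n : ℕ) :
    polyInner mu (φ m) (φ n) = if m = n then 1 else 0 :=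
  hON.2.2.2 m n

lemma span_range_eq_top (hON : IsOrthonormalPolys mu φ κ) :
    Submodule.span ℂ (Set.range φ) = ⊤ :=
  hON.toSequence.span hON.isUnit_leadingCoeff

lemma polyInner_eq_coeff_div [IsFiniteMeasure mu] (hcs : IsCompact (msupport mu))
    (hON : IsOrthonormalPolys mu φ κ) {n : ℕ} {p : ℂ[X]} (hp : p.natDegree ≤ n) :
    polyInner mu p (φ n) = p.coeff n / κ n := by
  have hmem : p ∈ Submodule.span ℂ (φ '' Set.Iic n) := by
    rw [show φ = hON.toSequence from rfl,
      hON.toSequence.span_degreeLE fun i _ => hON.isUnit_leadingCoeff i, mem_degreeLE]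
    exact degree_le_of_natDegree_le hp
  clear hp
  induction hmem using Submodule.span_induction with
  | mem _ hk =>
    obtain ⟨k, hk, rfl⟩ := hk
    rw [hON.polyInner_eq]
    rcases (Set.mem_Iic.1 hk).lt_or_eq with hlt | rfl
    · rw [if_neg hlt.ne, coeff_eq_zero_of_natDegree_lt (by rwa [hON.natDegree_eq]), zero_div]
    · rw [if_pos rfl, hON.coeff_self,
        div_self (Complex.ofReal_ne_zero.2 (hON.2.1 k).ne')]
  | zero => simp [polyInner]
  | add p₁ p₂ _ _ h₁ h₂ => rw [polyInner_add hcs, h₁, h₂, coeff_add, add_div]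
  | smul a p _ h => rw [polyInner_smul, h, coeff_smul, smul_eq_mul, mul_div_assoc]

lemma polyInner_eq_zero_of_natDegree_lt [IsFiniteMeasure mu] (hcs : IsCompact (msupport mu))
    (hON : IsOrthonormalPolys mu φ κ) {n : ℕ} {p : ℂ[X]} (hp : p.natDegree < n) :
    polyInner mu p (φ n) = 0 := by
  rw [hON.polyInner_eq_coeff_div hcs hp.le, coeff_eq_zero_of_natDegree_lt hp, zero_div]

end IsOrthonormalPolys

-- The unitary identification of the closure of the polynomials in `L²(μ)` with `ℓ²`,
-- `φₖ ↦ eₖ`, restricted to polynomials.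
def coordVec (mu : Measure ℂ) (φ : ℕ → ℂ[X]) (p : ℂ[X]) : ℓ² :=
  ∑ k ∈ Finset.range (p.natDegree + 1), lp.single 2 k (polyInner mu p (φ k))

lemma coordVec_zero (mu : Measure ℂ) (φ : ℕ → ℂ[X]) : coordVec mu φ 0 = 0 := by
  simp [coordVec, polyInner]

section coordVec

variable {mu : Measure ℂ} [IsFiniteMeasure mu] {φ : ℕ → ℂ[X]} {κ : ℕ → ℝ}

lemma coordVec_apply (hcs : IsCompact (msupport mu)) (hON : IsOrthonormalPolys mu φ κ)
    (p : ℂ[X]) (k : ℕ) : coordVec mu φ p k = polyInner mu p (φ k) := by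
  simp only [coordVec, lp.coeFn_sum, Finset.sum_apply, lp.single_apply, Pi.single_apply,
    Finset.sum_ite_eq, Finset.mem_range]
  split_ifs with hk
  · rfl
  · exact (hON.polyInner_eq_zero_of_natDegree_lt hcs (by omega)).symm

lemma coordVec_add (hcs : IsCompact (msupport mu)) (hON : IsOrthonormalPolys mu φ κ)
    (p₁ p₂ : ℂ[X]) : coordVec mu φ (p₁ + p₂) = coordVec mu φ p₁ + coordVec mu φ p₂ :=
  lp.ext <| funext fun k => by
    simp only [lp.coeFn_add, Pi.add_apply, coordVec_apply hcs hON, polyInner_add hcs]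

lemma coordVec_smul (hcs : IsCompact (msupport mu)) (hON : IsOrthonormalPolys mu φ κ)
    (a : ℂ) (p : ℂ[X]) : coordVec mu φ (a • p) = a • coordVec mu φ p :=
  lp.ext <| funext fun k => by
    simp only [lp.coeFn_smul, Pi.smul_apply, smul_eq_mul, coordVec_apply hcs hON, polyInner_smul]

lemma coordVec_orthonormalPoly (hcs : IsCompact (msupport mu))
    (hON : IsOrthonormalPolys mu φ κ) (m : ℕ) : coordVec mu φ (φ m) = lp.single 2 m 1 :=
  lp.ext <| funext fun k => by
    rw [coordVec_apply hcs hON, hON.polyInner_eq, lp.single_apply, Pi.single_apply]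
    exact if_congr eq_comm rfl rfl

lemma inner_coordVec (hcs : IsCompact (msupport mu)) (hON : IsOrthonormalPolys mu φ κ)
    (s p : ℂ[X]) : ⟪coordVec mu φ s, coordVec mu φ p⟫_ℂ = polyInner mu p s := by
  have hmem : p ∈ Submodule.span ℂ (Set.range φ) := hON.span_range_eq_top ▸ Submodule.mem_top
  induction hmem using Submodule.span_induction with
  | mem _ hk =>
    obtain ⟨k, rfl⟩ := hk
    rw [coordVec_orthonormalPoly hcs hON, lp.inner_single_right, coordVec_apply hcs hON,
      RCLike.inner_apply, conj_polyInner, one_mul]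
  | zero => simp [coordVec_zero, polyInner]
  | add p₁ p₂ _ _ h₁ h₂ => rw [coordVec_add hcs hON, inner_add_right, h₁, h₂, polyInner_add hcs]
  | smul a p _ h => rw [coordVec_smul hcs hON, inner_smul_right, h, polyInner_smul]

lemma norm_coordVec_sq (hcs : IsCompact (msupport mu)) (hON : IsOrthonormalPolys mu φ κ)
    (p : ℂ[X]) : ‖coordVec mu φ p‖ ^ 2 = ∫ z, ‖p.eval z‖ ^ 2 ∂mu := by
  rw [← inner_self_eq_norm_sq (𝕜 := ℂ), inner_coordVec hcs hON, polyInner_self,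
    RCLike.re_to_complex, Complex.ofReal_re]

end coordVec

section operators

variable {mu : Measure ℂ} [IsFiniteMeasure mu] {φ : ℕ → ℂ[X]} {κ : ℕ → ℝ}

lemma coordVec_X_mul (hcs : IsCompact (msupport mu)) (hON : IsOrthonormalPolys mu φ κ)
    (M : ℓ² →L[ℂ] ℓ²)
    (hM : ∀ k j : ℕ, (M (lp.single 2 k 1)) j =
      ∫ z, z * (φ k).eval z * conj ((φ j).eval z) ∂mu)
    (p : ℂ[X]) : M (coordVec mu φ p) = coordVec mu φ (X * p) := by
  have hmem : p ∈ Submodule.span ℂ (Set.range φ) := hON.span_range_eq_top ▸ Submodule.mem_top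
  induction hmem using Submodule.span_induction with
  | mem _ hk =>
    obtain ⟨k, rfl⟩ := hk
    refine lp.ext <| funext fun j => ?_
    rw [coordVec_orthonormalPoly hcs hON, hM, coordVec_apply hcs hON]
    simp only [polyInner, eval_mul, eval_X]
  | zero => rw [coordVec_zero, map_zero, mul_zero, coordVec_zero]
  | add p₁ p₂ _ _ h₁ h₂ =>
    rw [coordVec_add hcs hON, map_add, h₁, h₂, mul_add, coordVec_add hcs hON]
  | smul a p _ h =>
    rw [coordVec_smul hcs hON, map_smul, h, mul_smul_comm, coordVec_smul hcs hON]

lemma aeval_coordVec (hcs : IsCompact (msupport mu)) (hON : IsOrthonormalPolys mu φ κ)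
    (M : ℓ² →L[ℂ] ℓ²)
    (hM : ∀ k j : ℕ, (M (lp.single 2 k 1)) j =
      ∫ z, z * (φ k).eval z * conj ((φ j).eval z) ∂mu)
    (P p : ℂ[X]) : aeval M P (coordVec mu φ p) = coordVec mu φ (P * p) := by
  induction P using Polynomial.induction_on generalizing p with
  | C a =>
    rw [aeval_C, Algebra.algebraMap_eq_smul_one, smul_apply,
      one_apply_eq_self, ← smul_eq_C_mul, coordVec_smul hcs hON]
  | add P₁ P₂ h₁ h₂ =>
    rw [map_add, add_apply, h₁, h₂, add_mul, coordVec_add hcs hON]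
  | monomial n a h =>
    rw [pow_succ, ← mul_assoc, map_mul, aeval_X, mul_apply_eq_comp,
      coordVec_X_mul hcs hON M hM, h]
    congr 1
    ring

lemma shift_pow_apply_single (R : ℓ² →L[ℂ] ℓ²)
    (hR : ∀ (x : ℓ²) (n : ℕ), (R x) n = if n = 0 then 0 else x (n - 1))
    (a : ℂ) (j n : ℕ) : (R ^ n) (lp.single 2 j a) = lp.single 2 (j + n) a := by
  induction n with
  | zero => rfl
  | succ n ih =>
    refine lp.ext <| funext fun i => ?_
    rw [pow_succ', mul_apply_eq_comp, ih, hR]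
    rcases i with _ | i
    · simp
    · simp only [lp.single_apply, Pi.single_apply, Nat.add_sub_cancel, ← add_assoc,
        Nat.succ_ne_zero, if_false, Nat.add_right_cancel_iff]

theorem norm_aeval_sub_smul_pow_apply_single_sq (hcs : IsCompact (msupport mu))
    (hON : IsOrthonormalPolys mu φ κ) (M R : ℓ² →L[ℂ] ℓ²)
    (hM : ∀ k j : ℕ, (M (lp.single 2 k 1)) j =
      ∫ z, z * (φ k).eval z * conj ((φ j).eval z) ∂mu)
    (hR : ∀ (x : ℓ²) (n : ℕ), (R x) n = if n = 0 then 0 else x (n - 1))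
    {P : ℂ[X]} (hP : P.Monic) {q : ℕ} (hq : P.natDegree = q) (r : ℝ) (n : ℕ) :
    ‖(aeval M P - (r : ℂ) • R ^ q) (lp.single 2 n 1)‖ ^ 2 =
      (∫ z, ‖P.eval z‖ ^ 2 * ‖(φ n).eval z‖ ^ 2 ∂mu) + r ^ 2 - 2 * r * (κ n / κ (n + q)) := by
  have hdeg : (P * φ n).natDegree = n + q := by
    rw [hP.natDegree_mul' (show φ n ≠ 0 from hON.toSequence.ne_zero n), hq, hON.natDegree_eq,
      add_comm]
  have hlead : (P * φ n).coeff (n + q) = κ n := by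
    rw [← hdeg, coeff_natDegree, leadingCoeff_monic_mul hP, hON.2.2.1 n]
  have hvec : (aeval M P - (r : ℂ) • R ^ q) (lp.single 2 n 1) =
      coordVec mu φ (P * φ n) - lp.single 2 (n + q) (r : ℂ) := by
    rw [sub_apply, smul_apply, shift_pow_apply_single R hR, ← coordVec_orthonormalPoly hcs hON n,
      aeval_coordVec hcs hON M hM, ← lp.single_smul, smul_eq_mul, mul_one]
  have hcross : RCLike.re ⟪coordVec mu φ (P * φ n), lp.single 2 (n + q) (r : ℂ)⟫_ℂ =
      r * (κ n / κ (n + q)) := by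
    rw [lp.inner_single_right, coordVec_apply hcs hON, hON.polyInner_eq_coeff_div hcs hdeg.le,
      hlead, RCLike.inner_apply, ← Complex.ofReal_div, Complex.conj_ofReal,
      ← Complex.ofReal_mul, RCLike.re_to_complex, Complex.ofReal_re]
  rw [hvec, norm_sub_sq (𝕜 := ℂ), norm_coordVec_sq hcs hON, hcross, lp.norm_single (by norm_num),
    Complex.norm_real, Real.norm_eq_abs, sq_abs]
  simp only [eval_mul, norm_mul, mul_pow]
  ring

end operators

theorem stmt9_general (mu : Measure ℂ) [IsFiniteMeasure mu]
    (hcs : IsCompact (msupport mu))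
    (φ : ℕ → Polynomial ℂ) (κ : ℕ → ℝ) (hON : IsOrthonormalPolys mu φ κ)
    (M R : lp (fun _ : ℕ => ℂ) 2 →L[ℂ] lp (fun _ : ℕ => ℂ) 2)
    (hM : ∀ k j : ℕ, (M (lp.single 2 k 1)) j =
      ∫ z, z * (φ k).eval z * (starRingEnd ℂ) ((φ j).eval z) ∂mu)
    (hR : ∀ (x : lp (fun _ : ℕ => ℂ) 2) (n : ℕ),
      (R x) n = if n = 0 then 0 else x (n - 1))
    (P : Polynomial ℂ) (hP : P.Monic) (q : ℕ) (hq : P.natDegree = q)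
    (r : ℝ)
    (hκ : Tendsto (fun n => κ n / κ (n + q)) atTop (nhds r))
    (hPφ : Tendsto (fun n => ∫ z, ‖P.eval z‖ ^ 2 * ‖(φ n).eval z‖ ^ 2 ∂mu)
      atTop (nhds (r ^ 2))) :
    ∀ j : ℕ, Tendsto
      (fun n : ℕ => ‖(Polynomial.aeval M P - (r : ℂ) • R ^ q) ((R ^ n) (lp.single 2 j 1))‖)
      atTop (nhds 0) := by
  have hsq : Tendsto (fun n => (∫ z, ‖P.eval z‖ ^ 2 * ‖(φ n).eval z‖ ^ 2 ∂mu) + r ^ 2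
      - 2 * r * (κ n / κ (n + q))) atTop (nhds 0) := by
    have h := (hPφ.add_const (r ^ 2)).sub (hκ.const_mul (2 * r))
    rwa [show r ^ 2 + r ^ 2 - 2 * r * r = 0 by ring] at h
  intro j
  have h := (hsq.comp (tendsto_add_atTop_nat j)).sqrt
  rw [Real.sqrt_zero] at h
  refine h.congr fun n => ?_
  rw [Function.comp_apply, shift_pow_apply_single R hR, add_comm j n,
    ← norm_aeval_sub_smul_pow_apply_single_sq hcs hON M R hM hR hP hq,
    Real.sqrt_sq (norm_nonneg _)]

/-- If `κ_n/κ_{n+q} → r` and `∫|P|²|φ_n|²dμ → r²`, then `(P(M) - r Rᵠ) Rⁿ → 0`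
strongly, where `M` is the Bergman shift Hessenberg matrix and `R` the right shift. -/
theorem stmt9 (mu : Measure ℂ) [IsFiniteMeasure mu]
    (hcs : IsCompact (msupport mu)) (hinf : (msupport mu).Infinite)
    (φ : ℕ → Polynomial ℂ) (κ : ℕ → ℝ) (hON : IsOrthonormalPolys mu φ κ)
    (M R : lp (fun _ : ℕ => ℂ) 2 →L[ℂ] lp (fun _ : ℕ => ℂ) 2)
    (hM : ∀ k j : ℕ, (M (lp.single 2 k 1)) j =
      ∫ z, z * (φ k).eval z * (starRingEnd ℂ) ((φ j).eval z) ∂mu)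
    (hR : ∀ (x : lp (fun _ : ℕ => ℂ) 2) (n : ℕ),
      (R x) n = if n = 0 then 0 else x (n - 1))
    (P : Polynomial ℂ) (hP : P.Monic) (q : ℕ) (hq : P.natDegree = q) (hq1 : 1 ≤ q)
    (r : ℝ) (hr : 0 < r)
    (hκ : Tendsto (fun n => κ n / κ (n + q)) atTop (nhds r))
    (hPφ : Tendsto (fun n => ∫ z, ‖P.eval z‖ ^ 2 * ‖(φ n).eval z‖ ^ 2 ∂mu)
      atTop (nhds (r ^ 2))) :
    ∀ j : ℕ, Tendsto
      (fun n : ℕ => ‖(Polynomial.aeval M P - (r : ℂ) • R ^ q) ((R ^ n) (lp.single 2 j 1))‖)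
      atTop (nhds 0) :=
  stmt9_general mu hcs φ κ hON M R hM hR P hP q hq r hκ hPφ
end
end

section
/- Let μ be a finite Borel measure with compact infinite support on ℂ, P a monic polynomial of degree q ≥ 1, r > 0, and M the associated Bergman–shift Hessenberg matrix. Suppose (P(M) − rR^q)R^n → 0 strongly as n → ∞. Then κ_n/κ_{n+q} → r as n → ∞. -/
open MeasureTheory Polynomial Filter

noncomputable section

namespace Stmt10Aux

lemma null_compl (mu : Measure ℂ) : mu (msupport mu)ᶜ = 0 := by
  obtain ⟨T, hTc, hTsub, hTU⟩ := TopologicalSpace.isOpen_sUnion_countable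
    {U : Set ℂ | IsOpen U ∧ mu U = 0} (fun s hs => hs.1)
  have h0 : mu (⋃₀ {U : Set ℂ | IsOpen U ∧ mu U = 0}) = 0 := by
    rw [← hTU]
    exact (measure_sUnion_null_iff hTc).2 fun t ht => (hTsub ht).2
  refine measure_mono_null ?_ h0
  intro x hx
  simp only [msupport, Set.mem_compl_iff, Set.mem_setOf_eq, not_forall] at hx
  obtain ⟨U, hU, hU0⟩ := hx
  obtain ⟨V, hVU, hVopen, hxV⟩ := mem_nhds_iff.1 hU
  exact ⟨V, ⟨hVopen, measure_mono_null hVU (not_not.1 hU0)⟩, hxV⟩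

lemma integ_cont (mu : Measure ℂ) [IsFiniteMeasure mu] (hcs : IsCompact (msupport mu))
    (f : ℂ → ℂ) (hf : Continuous f) : Integrable f mu := by
  obtain ⟨C, hC⟩ := hcs.exists_bound_of_continuousOn hf.continuousOn
  refine ⟨hf.aestronglyMeasurable, HasFiniteIntegral.of_bounded (C := C) ?_⟩
  filter_upwards [mem_ae_iff.2 (null_compl mu)] with z hz
  exact hC z hz

end Stmt10Aux

set_option maxHeartbeats 3000000 in
/-- If `(P(M) - r Rᵠ) Rⁿ → 0` strongly, then `κ_n/κ_{n+q} → r`. -/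
theorem stmt10 (mu : Measure ℂ) [IsFiniteMeasure mu]
    (hcs : IsCompact (msupport mu)) (hinf : (msupport mu).Infinite)
    (φ : ℕ → Polynomial ℂ) (κ : ℕ → ℝ) (hON : IsOrthonormalPolys mu φ κ)
    (M R : lp (fun _ : ℕ => ℂ) 2 →L[ℂ] lp (fun _ : ℕ => ℂ) 2)
    (hM : ∀ k j : ℕ, (M (lp.single 2 k 1)) j =
      ∫ z, z * (φ k).eval z * (starRingEnd ℂ) ((φ j).eval z) ∂mu)
    (hR : ∀ (x : lp (fun _ : ℕ => ℂ) 2) (n : ℕ),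
      (R x) n = if n = 0 then 0 else x (n - 1))
    (P : Polynomial ℂ) (hP : P.Monic) (q : ℕ) (hq : P.natDegree = q) (hq1 : 1 ≤ q)
    (r : ℝ) (hr : 0 < r)
    (hstrong : ∀ x : lp (fun _ : ℕ => ℂ) 2, Tendsto
      (fun n : ℕ => ‖(Polynomial.aeval M P - (r : ℂ) • R ^ q) ((R ^ n) x)‖)
      atTop (nhds 0)) :
    Tendsto (fun n => κ n / κ (n + q)) atTop (nhds r) := by
  obtain ⟨hdeg, hκpos, hlead, horth⟩ := hON
  have hcont : ∀ f : ℂ → ℂ, Continuous f → Integrable f mu :=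
    fun f hf => Stmt10Aux.integ_cont mu hcs f hf
  -- the pairing
  set ip : Polynomial ℂ → Polynomial ℂ → ℂ :=
    fun p qq => ∫ z, p.eval z * (starRingEnd ℂ) (qq.eval z) ∂mu with hip
  have hint : ∀ p qq : Polynomial ℂ,
      Integrable (fun z => p.eval z * (starRingEnd ℂ) (qq.eval z)) mu :=
    fun p qq => hcont _ (p.continuous.mul (continuous_star.comp qq.continuous))
  have hiporth : ∀ m n, ip (φ m) (φ n) = if m = n then 1 else 0 := horth
  -- linearity of ip in the first argument
  have hipsum : ∀ (s : Finset ℕ) (c : ℕ → ℂ) (pp : ℕ → Polynomial ℂ) (qq : Polynomial ℂ),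
      ip (∑ i ∈ s, c i • pp i) qq = ∑ i ∈ s, c i * ip (pp i) qq := by
    intro s c pp qq
    have h1 : ∀ z : ℂ, (∑ i ∈ s, c i • pp i).eval z * (starRingEnd ℂ) (qq.eval z)
        = ∑ i ∈ s, c i * ((pp i).eval z * (starRingEnd ℂ) (qq.eval z)) := by
      intro z
      rw [Polynomial.eval_finset_sum, Finset.sum_mul]
      exact Finset.sum_congr rfl fun i _ => by
        rw [Polynomial.eval_smul, smul_eq_mul, mul_assoc]
    simp only [hip]
    rw [show (fun z => (∑ i ∈ s, c i • pp i).eval z * (starRingEnd ℂ) (qq.eval z))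
        = fun z => ∑ i ∈ s, c i * ((pp i).eval z * (starRingEnd ℂ) (qq.eval z)) from
      funext h1]
    rw [integral_finset_sum s (fun i _ => (hint (pp i) qq).const_mul (c i))]
    exact Finset.sum_congr rfl fun i _ => integral_const_mul (c i) _
  have hipsub : ∀ p p' qq : Polynomial ℂ, ip (p - p') qq = ip p qq - ip p' qq := by
    intro p p' qq
    simp only [hip]
    rw [show (fun z => (p - p').eval z * (starRingEnd ℂ) (qq.eval z))
        = fun z => p.eval z * (starRingEnd ℂ) (qq.eval z)
            - p'.eval z * (starRingEnd ℂ) (qq.eval z) from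
      funext fun z => by rw [Polynomial.eval_sub, sub_mul]]
    exact integral_sub (hint p qq) (hint p' qq)
  have hipsmul : ∀ (c : ℂ) (p qq : Polynomial ℂ), ip (c • p) qq = c * ip p qq := by
    intro c p qq
    simp only [hip]
    rw [show (fun z => (c • p).eval z * (starRingEnd ℂ) (qq.eval z))
        = fun z => c * (p.eval z * (starRingEnd ℂ) (qq.eval z)) from
      funext fun z => by rw [Polynomial.eval_smul, smul_eq_mul, mul_assoc]]
    exact integral_const_mul c _
  -- basic facts about φ
  have hφnat : ∀ n, (φ n).natDegree = n := fun n => natDegree_eq_of_degree_eq_some (hdeg n)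
  have hφcoeff : ∀ n, (φ n).coeff n = (κ n : ℂ) := by
    intro n
    have := hlead n
    rwa [Polynomial.leadingCoeff, hφnat n] at this
  have hφhigh : ∀ n m, n < m → (φ n).coeff m = 0 := by
    intro n m hnm
    exact coeff_eq_zero_of_degree_lt (by rw [hdeg n]; exact_mod_cast hnm)
  -- expansion in the φ basis
  have hexp : ∀ (d : ℕ) (p : Polynomial ℂ), (∀ m, d ≤ m → p.coeff m = 0) →
      ∃ a : ℕ → ℂ, p = ∑ k ∈ Finset.range d, a k • φ k := by
    intro d
    induction d with
    | zero =>
      intro p h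
      exact ⟨0, by
        rw [Finset.range_zero, Finset.sum_empty]
        exact Polynomial.ext fun m => by simp [h m (Nat.zero_le m)]⟩
    | succ d ih =>
      intro p h
      have hκne : ((κ d : ℝ) : ℂ) ≠ 0 := by exact_mod_cast (hκpos d).ne'
      set c : ℂ := p.coeff d / (κ d : ℂ) with hc
      have hg : ∀ m, d ≤ m → (p - c • φ d).coeff m = 0 := by
        intro m hm
        rcases eq_or_lt_of_le hm with rfl | hlt
        · simp [Polynomial.coeff_sub, Polynomial.coeff_smul, hφcoeff d, smul_eq_mul, hc,
            div_mul_cancel₀ _ hκne]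
        · have h1 : p.coeff m = 0 := h m hlt
          have h2 : (φ d).coeff m = 0 := hφhigh d m hlt
          simp [Polynomial.coeff_sub, Polynomial.coeff_smul, h1, h2]
      obtain ⟨a, ha⟩ := ih (p - c • φ d) hg
      refine ⟨Function.update a d c, ?_⟩
      rw [Finset.sum_range_succ, Function.update_self,
        Finset.sum_congr rfl (fun k hk =>
          by rw [Function.update_of_ne (Finset.mem_range.1 hk).ne]), ← ha]
      ring
  -- orthogonality against higher φ's
  have hiplow : ∀ (d : ℕ) (p : Polynomial ℂ), (∀ m, d ≤ m → p.coeff m = 0) →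
      ∀ j, d ≤ j → ip p (φ j) = 0 := by
    intro d p h j hj
    obtain ⟨a, ha⟩ := hexp d p h
    rw [ha, hipsum]
    refine Finset.sum_eq_zero fun k hk => ?_
    rw [hiporth k j, if_neg (by exact Nat.ne_of_lt (lt_of_lt_of_le (Finset.mem_range.1 hk) hj)), mul_zero]

  -- representation with ip coefficients
  have hrep : ∀ (d : ℕ) (p : Polynomial ℂ), (∀ m, d ≤ m → p.coeff m = 0) →
      p = ∑ k ∈ Finset.range d, ip p (φ k) • φ k := by
    intro d p h
    obtain ⟨a, ha⟩ := hexp d p h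
    have hcoef : ∀ k0 ∈ Finset.range d, ip p (φ k0) = a k0 := by
      intro k0 hk0
      rw [ha, hipsum,
        Finset.sum_congr rfl (fun k _ => by rw [hiporth k k0, mul_ite, mul_one, mul_zero]),
        Finset.sum_ite_eq' (Finset.range d) k0 a]
      exact if_pos hk0
    conv_lhs => rw [ha]
    exact Finset.sum_congr rfl fun k hk => by rw [hcoef k hk]
  set e : ℕ → lp (fun _ : ℕ => ℂ) 2 := fun n => lp.single 2 n 1 with he
  have hsing : ∀ k j : ℕ, (e k : ∀ _ : ℕ, ℂ) j = if j = k then 1 else 0 := by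
    intro k j
    by_cases hjk : j = k
    · subst hjk; simp [he, lp.single_apply_self]
    · simp [he, lp.single_apply_ne 2 k _ hjk, hjk]
  have hcoord : ∀ (d : ℕ) (c : ℕ → ℂ) (j : ℕ),
      ((∑ k ∈ Finset.range d, c k • e k : lp (fun _ : ℕ => ℂ) 2) : ∀ _ : ℕ, ℂ) j
        = if j < d then c j else 0 := by
    intro d c j
    rw [lp.coeFn_sum, Finset.sum_apply,
      Finset.sum_congr rfl (fun k _ => by
        rw [lp.coeFn_smul, Pi.smul_apply, hsing k j, smul_eq_mul, mul_ite, mul_one, mul_zero]),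
      Finset.sum_ite_eq (Finset.range d) j c]
    simp [Finset.mem_range]
  have hMe : ∀ k j : ℕ, (M (e k) : ∀ _ : ℕ, ℂ) j = ip (X * φ k) (φ j) := by
    intro k j
    have : (M (e k) : ∀ _ : ℕ, ℂ) j = ∫ z, z * (φ k).eval z * (starRingEnd ℂ) ((φ j).eval z) ∂mu :=
      hM k j
    rw [this]
    simp only [hip, Polynomial.eval_mul, Polynomial.eval_X]
  -- degree bound for X^i * φ n
  have hXco : ∀ (i n0 m' : ℕ), n0 + i + 1 ≤ m' → (X ^ i * φ n0).coeff m' = 0 := by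
    intro i n0 m' hm'
    apply coeff_eq_zero_of_natDegree_lt
    calc (X ^ i * φ n0).natDegree ≤ (X ^ i : Polynomial ℂ).natDegree + (φ n0).natDegree :=
          natDegree_mul_le
      _ = i + n0 := by rw [natDegree_X_pow, hφnat]
      _ < m' := by omega
  -- one multiplication step
  have hstep : ∀ (d : ℕ) (p : Polynomial ℂ), (∀ m, d + 1 ≤ m → p.coeff m = 0) →
      M (∑ k ∈ Finset.range (d + 1), ip p (φ k) • e k)
        = ∑ k ∈ Finset.range (d + 2), ip (X * p) (φ k) • e k := by
    intro d p h
    have hXp : ∀ m, d + 2 ≤ m → (X * p).coeff m = 0 := by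
      intro m hm
      obtain ⟨m', rfl⟩ : ∃ m', m = m' + 1 := ⟨m - 1, by omega⟩
      rw [Polynomial.coeff_X_mul]
      exact h m' (by omega)
    have hXrep : X * p = ∑ k ∈ Finset.range (d + 1), ip p (φ k) • (X * φ k) := by
      conv_lhs => rw [hrep (d + 1) p h]
      rw [Finset.mul_sum]
      exact Finset.sum_congr rfl fun k _ => (mul_smul_comm _ _ _)
    apply lp.ext
    funext j
    have hL : (M (∑ k ∈ Finset.range (d + 1), ip p (φ k) • e k) : ∀ _ : ℕ, ℂ) j
        = ip (X * p) (φ j) := by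
      rw [map_sum, lp.coeFn_sum, Finset.sum_apply,
        Finset.sum_congr rfl (fun k _ => by
          rw [M.map_smul, lp.coeFn_smul, Pi.smul_apply, smul_eq_mul, hMe k j] :
            ∀ k ∈ Finset.range (d + 1),
              (M (ip p (φ k) • e k) : ∀ _ : ℕ, ℂ) j = ip p (φ k) * ip (X * φ k) (φ j)),
        hXrep, hipsum]
    rw [hL, hcoord]
    by_cases hj : j < d + 2
    · rw [if_pos hj]
    · rw [if_neg hj]
      exact hiplow (d + 2) (X * p) hXp j (by omega)
  -- powers of M
  have hpow : ∀ (m n : ℕ), (M ^ m) (e n)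
      = ∑ k ∈ Finset.range (n + m + 1), ip (X ^ m * φ n) (φ k) • e k := by
    intro m
    induction m with
    | zero =>
      intro n
      rw [pow_zero, ContinuousLinearMap.one_apply]
      apply lp.ext
      funext j
      rw [hsing, hcoord]
      simp only [pow_zero, one_mul, hiporth n, Nat.add_zero]
      by_cases hj : j = n
      · subst hj; simp
      · simp [hj, Ne.symm hj]
    | succ m ihm =>
      intro n
      rw [pow_succ', ContinuousLinearMap.mul_apply, ihm n,
        hstep (n + m) (X ^ m * φ n) (fun m' hm' => hXco m n m' (by omega))]
      have hx : X * (X ^ m * φ n) = X ^ (m + 1) * φ n := by ring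
      rw [hx]
      rfl

  -- aeval
  have haeval : ∀ n, (Polynomial.aeval M P) (e n)
      = ∑ k ∈ Finset.range (n + q + 1), ip (P * φ n) (φ k) • e k := by
    intro n
    have hPrep : ∑ i ∈ Finset.range (q + 1), P.coeff i • (X ^ i * φ n) = P * φ n := by
      rw [Finset.sum_congr rfl (fun i _ => (smul_mul_assoc (P.coeff i) (X ^ i) (φ n)).symm),
        ← Finset.sum_mul]
      congr 1
      rw [Finset.sum_congr rfl (fun i _ => Polynomial.smul_X_eq_monomial)]
      exact (P.as_sum_range' (q + 1) (by omega)).symm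
    have h1 : (Polynomial.aeval M P) (e n)
        = ∑ i ∈ Finset.range (q + 1), P.coeff i • ((M ^ i) (e n)) := by
      rw [Polynomial.aeval_eq_sum_range (R := ℂ) M, hq, ContinuousLinearMap.sum_apply]
      exact Finset.sum_congr rfl fun i _ => rfl
    rw [h1,
      Finset.sum_congr rfl (fun i hi => by
        rw [hpow i n,
          Finset.sum_subset (Finset.range_subset_range.2 (by
            have := Finset.mem_range.1 hi; omega : n + i + 1 ≤ n + q + 1))
            (fun k _ hk => by
              rw [hiplow (n + i + 1) (X ^ i * φ n) (fun m' hm' => hXco i n m' hm') k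
                (by simpa using hk), zero_smul])] :
          ∀ i ∈ Finset.range (q + 1), P.coeff i • ((M ^ i) (e n))
            = P.coeff i • ∑ k ∈ Finset.range (n + q + 1), ip (X ^ i * φ n) (φ k) • e k),
      Finset.sum_congr rfl (fun i _ => Finset.smul_sum),
      Finset.sum_comm]
    refine Finset.sum_congr rfl fun k _ => ?_
    rw [Finset.sum_congr rfl (fun i _ => smul_smul (P.coeff i) (ip (X ^ i * φ n) (φ k)) (e k)),
      ← Finset.sum_smul]
    congr 1
    rw [← hipsum, hPrep]
  -- top coefficient identity
  have hkey : ∀ n, ip (P * φ n) (φ (n + q)) = ((κ n / κ (n + q) : ℝ) : ℂ) := by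
    intro n
    set cc : ℂ := ((κ n / κ (n + q) : ℝ) : ℂ) with hcc
    have hκne : (κ (n + q) : ℝ) ≠ 0 := (hκpos (n + q)).ne'
    have hccκ : cc * (κ (n + q) : ℂ) = (κ n : ℂ) := by
      rw [hcc]
      push_cast
      rw [div_mul_cancel₀]
      exact_mod_cast hκne
    have hPtop : (P * φ n).coeff (n + q) = (κ n : ℂ) := by
      have h2 := Polynomial.coeff_mul_degree_add_degree P (φ n)
      rw [hq, hφnat, hP.leadingCoeff, hlead n, one_mul] at h2
      rw [Nat.add_comm n q]
      exact h2
    have hg : ∀ m, n + q ≤ m → (P * φ n - cc • φ (n + q)).coeff m = 0 := by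
      intro m hm
      rw [Polynomial.coeff_sub, Polynomial.coeff_smul, smul_eq_mul]
      by_cases h2 : m = n + q
      · subst h2
        rw [hPtop, hφcoeff, hccκ, sub_self]
      · have h3 : (P * φ n).coeff m = 0 := by
          apply coeff_eq_zero_of_natDegree_lt
          calc (P * φ n).natDegree ≤ P.natDegree + (φ n).natDegree := natDegree_mul_le
            _ = q + n := by rw [hq, hφnat]
            _ < m := by omega
        rw [h3, hφhigh (n + q) m (by omega), mul_zero, sub_self]
    have h0 : ip (P * φ n - cc • φ (n + q)) (φ (n + q)) = 0 :=
      hiplow (n + q) _ hg (n + q) le_rfl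
    rw [hipsub, hipsmul, hiporth, if_pos rfl, mul_one] at h0
    exact sub_eq_zero.mp h0
  -- shift facts
  have hRpow : ∀ (m : ℕ) (x : lp (fun _ : ℕ => ℂ) 2) (j : ℕ),
      ((R ^ m) x : ∀ _ : ℕ, ℂ) j = if j < m then 0 else x (j - m) := by
    intro m
    induction m with
    | zero => intro x j; simp
    | succ m ihm =>
      intro x j
      rw [pow_succ, ContinuousLinearMap.mul_apply, ihm (R x) j]
      by_cases h1 : j < m
      · rw [if_pos h1, if_pos (by omega)]
      · rw [if_neg h1, hR x (j - m)]
        by_cases h2 : j = m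
        · rw [if_pos (by omega), if_pos (by omega)]
        · rw [if_neg (by omega), if_neg (by omega), Nat.sub_sub]
  have hRe : ∀ n, (R ^ n) (e 0) = e n := by
    intro n
    apply lp.ext
    funext j
    rw [hRpow n (e 0) j, hsing n j]
    by_cases h1 : j < n
    · rw [if_pos h1, if_neg (by omega)]
    · rw [if_neg h1, hsing 0 (j - n)]
      by_cases h2 : j = n
      · rw [if_pos (by omega), if_pos h2]
      · rw [if_neg (by omega), if_neg h2]
  -- the coordinate of the difference operator
  have hAcoord : ∀ n, ((Polynomial.aeval M P - (r : ℂ) • R ^ q) (e n) : ∀ _ : ℕ, ℂ) (n + q)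
      = ((κ n / κ (n + q) : ℝ) : ℂ) - (r : ℂ) := by
    intro n
    rw [ContinuousLinearMap.sub_apply, lp.coeFn_sub, Pi.sub_apply,
      ContinuousLinearMap.smul_apply, lp.coeFn_smul, Pi.smul_apply, smul_eq_mul,
      haeval n, hcoord, if_pos (by omega), hkey n,
      hRpow q (e n) (n + q), if_neg (by omega), Nat.add_sub_cancel, hsing n n, if_pos rfl,
      mul_one]
  have hbound : ∀ n, ‖κ n / κ (n + q) - r‖
      ≤ ‖(Polynomial.aeval M P - (r : ℂ) • R ^ q) ((R ^ n) (e 0))‖ := by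
    intro n
    rw [hRe n]
    have h1 := lp.norm_apply_le_norm (E := fun _ : ℕ => ℂ) (p := 2) two_ne_zero
      ((Polynomial.aeval M P - (r : ℂ) • R ^ q) (e n)) (n + q)
    rw [hAcoord n] at h1
    have h2 : ‖κ n / κ (n + q) - r‖ = ‖((κ n / κ (n + q) : ℝ) : ℂ) - (r : ℂ)‖ := by
      rw [← Complex.ofReal_sub, Complex.norm_real]
    rw [h2]
    exact h1
  rw [tendsto_iff_norm_sub_tendsto_zero]
  exact squeeze_zero (fun n => norm_nonneg _) hbound (hstrong (e 0))
end
end
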